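/- arXiv:1507.06816 — 4 statements merged into one kernel-verified Lean document; each statement's English description precedes it below -/
import Mathlib

section
/- Let X be a complex Banach space, p > 0, and F, G finite rank operators on X. Set H := F+G−FG (so that (I−F)(I−G) = I−H). Then det_p((I−F)(I−G)) = det(I−F)·det_p(I−G)·exp(∑_{k=1}^{⌈p⌉−1} tr(H^k − G^k)/k). -/
set_option synthInstance.maxHeartbeats 1000000
set_option maxHeartbeats 1000000
set_option linter.unusedSectionVars false

section Aux
variable {X : Type*} [NormedAddCommGroup X] [NormedSpace ℂ X]

lemma det_aux (A : X →ₗ[ℂ] X) (V : Submodule ℂ X)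
    [FiniteDimensional ℂ V] (hV : ∀ x, A x ∈ V) :
    LinearMap.det ((LinearMap.id : LinearMap.range A →ₗ[ℂ] LinearMap.range A) -
        A.restrict fun x _ => LinearMap.mem_range_self _ x) =
      LinearMap.det ((LinearMap.id : V →ₗ[ℂ] V) - A.restrict fun x _ => hV x) := by
  have hle : LinearMap.range A ≤ V := by rintro _ ⟨x, rfl⟩; exact hV x
  haveI : FiniteDimensional ℂ (LinearMap.range A) := Submodule.finiteDimensional_of_le hle
  set B : LinearMap.range A →ₗ[ℂ] V := Submodule.inclusion hle
  set C : V →ₗ[ℂ] LinearMap.range A :=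
    LinearMap.codRestrict (LinearMap.range A) (A.comp V.subtype)
      (fun v => LinearMap.mem_range_self A (v : X))
  have h1 : B.comp C = A.restrict fun x _ => hV x := by
    ext ⟨v, hv⟩; rfl
  have h2 : C.comp B = A.restrict fun x _ => LinearMap.mem_range_self _ x := by
    ext ⟨v, hv⟩; rfl
  let bR := Module.finBasis ℂ (LinearMap.range A)
  let bV := Module.finBasis ℂ V
  rw [← LinearMap.det_toMatrix bR, ← LinearMap.det_toMatrix bV, _root_.map_sub, _root_.map_sub,
    LinearMap.toMatrix_id, LinearMap.toMatrix_id, ← h1, ← h2,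
    LinearMap.toMatrix_comp bR bV bR, LinearMap.toMatrix_comp bV bR bV,
    Matrix.det_one_sub_mul_comm]

lemma trace_aux (A : X →ₗ[ℂ] X) (V : Submodule ℂ X)
    [FiniteDimensional ℂ V] (hV : ∀ x, A x ∈ V) :
    LinearMap.trace ℂ (LinearMap.range A)
        (A.restrict fun x _ => LinearMap.mem_range_self _ x) =
      LinearMap.trace ℂ V (A.restrict fun x _ => hV x) := by
  have hle : LinearMap.range A ≤ V := by rintro _ ⟨x, rfl⟩; exact hV x
  haveI : FiniteDimensional ℂ (LinearMap.range A) := Submodule.finiteDimensional_of_le hle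
  set B : LinearMap.range A →ₗ[ℂ] V := Submodule.inclusion hle
  set C : V →ₗ[ℂ] LinearMap.range A :=
    LinearMap.codRestrict (LinearMap.range A) (A.comp V.subtype)
      (fun v => LinearMap.mem_range_self A (v : X))
  have h1 : B.comp C = A.restrict fun x _ => hV x := by ext ⟨v, hv⟩; rfl
  have h2 : C.comp B = A.restrict fun x _ => LinearMap.mem_range_self _ x := by
    ext ⟨v, hv⟩; rfl
  rw [← h1, ← h2, LinearMap.trace_comp_comm']


end Aux


open scoped ENNReal

variable {X : Type*} [NormedAddCommGroup X] [NormedSpace ℂ X] [CompleteSpace X]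

/-- A continuous linear operator has finite rank. -/
def IsFiniteRank (F : X →L[ℂ] X) : Prop :=
  FiniteDimensional ℂ (LinearMap.range (F : X →ₗ[ℂ] X))

/-- `det(I - F)`, defined as the determinant of the restriction of `I - F` to the
(finite-dimensional) range of `F`. -/
noncomputable def detOneSub (F : X →L[ℂ] X) : ℂ :=
  LinearMap.det
    ((LinearMap.id : LinearMap.range (F : X →ₗ[ℂ] X) →ₗ[ℂ] LinearMap.range (F : X →ₗ[ℂ] X)) -
      (F : X →ₗ[ℂ] X).restrict fun x _ => LinearMap.mem_range_self _ x)

/-- `tr F`, the trace of the restriction of `F` to its range. -/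
noncomputable def trOn (F : X →L[ℂ] X) : ℂ :=
  LinearMap.trace ℂ (LinearMap.range (F : X →ₗ[ℂ] X))
    ((F : X →ₗ[ℂ] X).restrict fun x _ => LinearMap.mem_range_self _ x)

/-- The `p`-regularized determinant `det_p(I-F)` of a finite rank operator. -/
noncomputable def detp (p : ℝ) (F : X →L[ℂ] X) : ℂ :=
  detOneSub F * Complex.exp (∑ k ∈ Finset.Icc 1 (⌈p⌉₊ - 1), trOn (F ^ k) / (k : ℂ))

lemma detOneSub_eq (F : X →L[ℂ] X) (V : Submodule ℂ X) [FiniteDimensional ℂ V]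
    (hV : ∀ x, F x ∈ V) :
    detOneSub F = LinearMap.det ((LinearMap.id : V →ₗ[ℂ] V) -
      (F : X →ₗ[ℂ] X).restrict fun x _ => hV x) :=
  det_aux _ _ _

lemma trOn_eq (F : X →L[ℂ] X) (V : Submodule ℂ X) [FiniteDimensional ℂ V]
    (hV : ∀ x, F x ∈ V) :
    trOn F = LinearMap.trace ℂ V ((F : X →ₗ[ℂ] X).restrict fun x _ => hV x) :=
  trace_aux _ _ _

/-- For `p > 0` and finite rank operators `F, G` on a complex Banach space,
with `H := F + G - F*G` (so `(I-F)(I-G) = I-H`),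
`det_p((I-F)(I-G)) = det(I-F) · det_p(I-G) · exp(∑_{k=1}^{⌈p⌉-1} tr(H^k - G^k)/k)`. -/
theorem detp_mul (p : ℝ) (hp : 0 < p) (F G : X →L[ℂ] X)
    (hF : IsFiniteRank F) (hG : IsFiniteRank G) :
    detp p (F + G - F * G) =
      detOneSub F * detp p G *
        Complex.exp (∑ k ∈ Finset.Icc 1 (⌈p⌉₊ - 1),
          trOn ((F + G - F * G) ^ k - G ^ k) / (k : ℂ)) := by
  classical
  haveI : FiniteDimensional ℂ (LinearMap.range (F : X →ₗ[ℂ] X)) := hF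
  haveI : FiniteDimensional ℂ (LinearMap.range (G : X →ₗ[ℂ] X)) := hG
  set n := ⌈p⌉₊ - 1 with hn
  set V : Submodule ℂ X :=
    LinearMap.range (F : X →ₗ[ℂ] X) ⊔ LinearMap.range (G : X →ₗ[ℂ] X) with hV
  haveI : FiniteDimensional ℂ V := Submodule.finiteDimensional_sup _ _
  have hFV : ∀ x, F x ∈ V := fun x => Submodule.mem_sup_left ⟨x, rfl⟩
  have hGV : ∀ x, G x ∈ V := fun x => Submodule.mem_sup_right ⟨x, rfl⟩
  set H : X →L[ℂ] X := F + G - F * G with hH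
  have hHV : ∀ x, H x ∈ V := by
    intro x
    have : H x = F x + G x - F (G x) := by
      simp [hH, ContinuousLinearMap.sub_apply, ContinuousLinearMap.add_apply,
        ContinuousLinearMap.mul_apply]
    rw [this]
    exact sub_mem (add_mem (hFV x) (hGV x)) (hFV _)
  have powmem : ∀ (T : X →L[ℂ] X), (∀ x, T x ∈ V) → ∀ k, 1 ≤ k → ∀ x, (T ^ k) x ∈ V := by
    intro T hT k hk x
    obtain ⟨m, rfl⟩ : ∃ m, k = m + 1 := ⟨k - 1, by omega⟩
    rw [pow_succ']
    exact hT _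
  -- determinant multiplicativity
  have hdet : detOneSub H = detOneSub F * detOneSub G := by
    rw [detOneSub_eq F V hFV, detOneSub_eq G V hGV, detOneSub_eq H V hHV,
      ← LinearMap.det_comp]
    congr 1
    ext ⟨x, hx⟩
    simp only [LinearMap.sub_apply, LinearMap.comp_apply, LinearMap.id_coe, id_eq,
      LinearMap.restrict_coe_apply, Submodule.coe_sub]
    have hHx : (H : X →ₗ[ℂ] X) x = F x + G x - F (G x) := by
      simp [hH, ContinuousLinearMap.sub_apply, ContinuousLinearMap.add_apply,
        ContinuousLinearMap.mul_apply]
    rw [map_sub, hHx]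
    simp only [ContinuousLinearMap.coe_coe]
    abel
  -- trace additivity
  have htr : ∀ k, 1 ≤ k → trOn (H ^ k - G ^ k) = trOn (H ^ k) - trOn (G ^ k) := by
    intro k hk
    have hHk := powmem H hHV k hk
    have hGk := powmem G hGV k hk
    have hs : ∀ x, (H ^ k - G ^ k) x ∈ V := by
      intro x
      rw [ContinuousLinearMap.sub_apply]
      exact sub_mem (hHk x) (hGk x)
    rw [trOn_eq _ V hs, trOn_eq _ V hHk, trOn_eq _ V hGk, ← map_sub]
    congr 1
  -- assemble
  have hsum :
      (∑ k ∈ Finset.Icc 1 n, trOn (G ^ k) / (k : ℂ)) +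
        (∑ k ∈ Finset.Icc 1 n, trOn (H ^ k - G ^ k) / (k : ℂ)) =
      ∑ k ∈ Finset.Icc 1 n, trOn (H ^ k) / (k : ℂ) := by
    rw [← Finset.sum_add_distrib]
    apply Finset.sum_congr rfl
    intro k hk
    have hk1 : 1 ≤ k := (Finset.mem_Icc.mp hk).1
    rw [htr k hk1]
    ring
  rw [detp, detp, hdet, ← hsum, Complex.exp_add]
  ring
end

section
/- Let (V,‖·‖_V) be a quasi-normed complex vector space with quasi-triangle constant q_V, and let f : V → ℂ satisfy: (i) for all x, y ∈ V the function ℂ ∋ λ ↦ f(x+λy) is entire; (ii) there is a monotonically non-decreasing function Θ on [0,∞) with |f(x)| ≤ Θ(‖x‖_V) for all x ∈ V. Then for all x, y ∈ V: |f(x)−f(y)| ≤ ‖x−y‖_V · Θ(q_V²(‖x‖_V + ‖y‖_V + 1)). -/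
/-- Let `(V, nV)` be a quasi-normed complex vector space with quasi-triangle
constant `qV ≥ 1`, and let `f : V → ℂ` be such that (i) `z ↦ f (x + z • y)` is entire for all
`x, y ∈ V`, and (ii) `|f x| ≤ Θ (nV x)` for a function `Θ` that is monotonically
non-decreasing on `[0, ∞)`.  Then
`|f x - f y| ≤ nV (x - y) * Θ (qV² * (nV x + nV y + 1))` for all `x, y ∈ V`. -/
theorem quasinorm_lipschitz_bound {V : Type*} [AddCommGroup V] [Module ℂ V]
    (nV : V → ℝ) (qV : ℝ) (hqV : 1 ≤ qV)
    (hn0 : ∀ x : V, 0 ≤ nV x)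
    (hn_eq_zero : ∀ x : V, nV x = 0 ↔ x = 0)
    (hn_smul : ∀ (c : ℂ) (x : V), nV (c • x) = ‖c‖ * nV x)
    (hn_add : ∀ x y : V, nV (x + y) ≤ qV * (nV x + nV y))
    (f : V → ℂ)
    (hf_entire : ∀ x y : V, AnalyticOnNhd ℂ (fun z : ℂ => f (x + z • y)) Set.univ)
    (Θ : ℝ → ℝ) (hΘ : MonotoneOn Θ (Set.Ici 0))
    (hf_bound : ∀ x : V, ‖f x‖ ≤ Θ (nV x)) :
    ∀ x y : V, ‖f x - f y‖ ≤ nV (x - y) * Θ (qV ^ 2 * (nV x + nV y + 1)) := by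
  intro x y
  set d : ℝ := nV (x - y) with hd
  set M : ℝ := qV ^ 2 * (nV x + nV y + 1) with hM
  have hx0 := hn0 x
  have hy0 := hn0 y
  have hd0 : 0 ≤ d := hn0 _
  have hM0 : 0 ≤ M := by positivity
  rcases eq_or_lt_of_le hd0 with hdz | hdpos
  · -- d = 0 : x = y
    have hxy : x - y = 0 := (hn_eq_zero _).1 hdz.symm
    have hxy' : x = y := sub_eq_zero.1 hxy
    subst hxy'
    have h1 : nV (x - x) = 0 := hdz.symm
    simp [h1]
    rw [← hdz, zero_mul]
  · -- d > 0
    set g : ℂ → ℂ := fun z => f (y + z • (x - y)) with hg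
    have hgdiff : Differentiable ℂ g := fun z =>
      ((hf_entire y (x - y)) z (Set.mem_univ z)).differentiableAt
    -- Θ M is the bound on circles around segment points
    have key : ∀ z ∈ segment ℝ (0 : ℂ) 1, ∀ w ∈ Metric.sphere z (1 / d), ‖g w‖ ≤ Θ M := by
      rintro z hz w hw
      obtain ⟨a, b, ha, hb, hab, hzab⟩ := hz
      have hzb : z = (b : ℂ) := by
        rw [← hzab]; push_cast; simp
      have hb1 : b ≤ 1 := by linarith
      -- norm of the point y + w • (x - y)
      have hwz : ‖w - z‖ = 1 / d := by
        simpa [Complex.dist_eq] using hw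
      have hsplit : y + w • (x - y) = (y + z • (x - y)) + (w - z) • (x - y) := by
        rw [sub_smul]; abel
      have hA : nV (y + z • (x - y)) ≤ qV * (nV x + nV y) := by
        have h1 : y + z • (x - y) = z • x + ((1 : ℂ) - z) • y := by
          rw [sub_smul, smul_sub, one_smul]; abel
        have hz1 : ‖z‖ = b := by
          rw [hzb, Complex.norm_real, Real.norm_eq_abs, abs_of_nonneg hb]
        have hz2 : ‖(1 : ℂ) - z‖ = 1 - b := by
          have h2 : (1 : ℂ) - (b : ℂ) = ((1 - b : ℝ) : ℂ) := by push_cast; ring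
          rw [hzb, h2, Complex.norm_real, Real.norm_eq_abs,
            abs_of_nonneg (by linarith : (0:ℝ) ≤ 1 - b)]
        calc nV (y + z • (x - y)) = nV (z • x + ((1 : ℂ) - z) • y) := by rw [h1]
          _ ≤ qV * (nV (z • x) + nV (((1 : ℂ) - z) • y)) := hn_add _ _
          _ = qV * (b * nV x + (1 - b) * nV y) := by rw [hn_smul, hn_smul, hz1, hz2]
          _ ≤ qV * (nV x + nV y) := by
              apply mul_le_mul_of_nonneg_left _ (by linarith)
              nlinarith
      have hB : nV (y + w • (x - y)) ≤ M := by
        calc nV (y + w • (x - y))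
            ≤ qV * (nV (y + z • (x - y)) + nV ((w - z) • (x - y))) := by
              rw [hsplit]; exact hn_add _ _
          _ = qV * (nV (y + z • (x - y)) + (1 / d) * d) := by rw [hn_smul, hwz]
          _ = qV * (nV (y + z • (x - y)) + 1) := by
              rw [one_div_mul_cancel hdpos.ne']
          _ ≤ qV * (qV * (nV x + nV y) + 1) := by
              apply mul_le_mul_of_nonneg_left _ (by linarith)
              linarith
          _ ≤ M := by rw [hM]; nlinarith
      calc ‖g w‖ ≤ Θ (nV (y + w • (x - y))) := hf_bound _
        _ ≤ Θ M := hΘ (hn0 _) (by exact hM0) hB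
    -- derivative bound on the segment
    have hderiv : ∀ z ∈ segment ℝ (0 : ℂ) 1, ‖deriv g z‖ ≤ Θ M * d := by
      intro z hz
      have h := Complex.norm_deriv_le_of_forall_mem_sphere_norm_le
        (c := z) (R := 1 / d) (C := Θ M) (by positivity)
        hgdiff.diffContOnCl (key z hz)
      calc ‖deriv g z‖ ≤ Θ M / (1 / d) := h
        _ = Θ M * d := by field_simp
    -- mean value inequality
    have hmv : ‖g 1 - g 0‖ ≤ (Θ M * d) * ‖(1 : ℂ) - 0‖ :=
      Convex.norm_image_sub_le_of_norm_deriv_le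
        (fun z _ => hgdiff z) hderiv (convex_segment _ _)
        (left_mem_segment ℝ (0 : ℂ) 1) (right_mem_segment ℝ (0 : ℂ) 1)
    have hg1 : g 1 = f x := by simp [hg]
    have hg0 : g 0 = f y := by simp [hg]
    have : ‖f x - f y‖ ≤ Θ M * d := by
      rw [← hg1, ← hg0]
      simpa using hmv
    linarith [this, mul_comm (Θ M) d]
end

section
/- Let X be a complex Banach space, p > 0, let (I,‖·‖_I) be an l_p-ideal in B(X), let det_{p,I}(I−·) : I → ℂ be the unique ‖·‖_I-continuous function with det_{p,I}(I−F) = det_p(I−F) for all F ∈ F(X), and let L ∈ I and B ∈ B(X). Then det_{p,I}(I−LB) = det_{p,I}(I−BL). -/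
open scoped ENNReal

variable {X : Type*} [NormedAddCommGroup X] [NormedSpace ℂ X] [CompleteSpace X]

open scoped ENNReal

variable {X : Type*} [NormedAddCommGroup X] [NormedSpace ℂ X] [CompleteSpace X]

/-- The Riesz projection of `T` at `μ`, computed with the circle of radius `r` around `μ`. -/
noncomputable def rieszProjection (T : X →L[ℂ] X) (μ : ℂ) (r : ℝ) : X →L[ℂ] X :=
  (2 * Real.pi * Complex.I)⁻¹ • ∮ z in C(μ, r), resolvent T z

/-- `μ` is a discrete eigenvalue of `T`: an isolated point of the spectrum whose
Riesz projection has finite-dimensional range. -/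
def IsDiscreteEigenvalue (T : X →L[ℂ] X) (μ : ℂ) : Prop :=
  μ ∈ spectrum ℂ T ∧ ∃ r, 0 < r ∧
    (∀ z ∈ Metric.closedBall μ r, z ≠ μ → z ∉ spectrum ℂ T) ∧
    FiniteDimensional ℂ (LinearMap.range ((rieszProjection T μ r : X →L[ℂ] X) : X →ₗ[ℂ] X))

open scoped Classical in
/-- The algebraic multiplicity of `μ`: the dimension of the range of the Riesz projection
computed with a radius isolating `μ` from the rest of the spectrum. -/
noncomputable def algebraicMultiplicity (T : X →L[ℂ] X) (μ : ℂ) : ℕ :=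
  if h : ∃ r, 0 < r ∧ ∀ z ∈ Metric.closedBall μ r, z ≠ μ → z ∉ spectrum ℂ T then
    Module.finrank ℂ (LinearMap.range ((rieszProjection T μ h.choose : X →L[ℂ] X) : X →ₗ[ℂ] X))
  else 0

/-- `∑_j |λ_j(T)|^p`, the sum over the discrete eigenvalues of `T`, counted with
algebraic multiplicity (as an extended nonnegative real). -/
noncomputable def eigSum (p : ℝ) (T : X →L[ℂ] X) : ℝ≥0∞ :=
  ∑' μ : {μ : ℂ // IsDiscreteEigenvalue T μ},
    (algebraicMultiplicity T (μ : ℂ) : ℝ≥0∞) * ENNReal.ofReal (‖(μ : ℂ)‖ ^ p)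

/-- The number of discrete eigenvalues of `T` in the set `S`, counted with algebraic
multiplicity (as an extended nonnegative real). -/
noncomputable def eigCount (T : X →L[ℂ] X) (S : Set ℂ) : ℝ≥0∞ :=
  ∑' μ : {μ : ℂ // μ ∈ S ∧ IsDiscreteEigenvalue T μ},
    (algebraicMultiplicity T (μ : ℂ) : ℝ≥0∞)

/-- An `l_p`-ideal in `B(X)`: a quasi-normed subspace (with quasi-norm `norm'` and
quasi-triangle constant `q`) of the bounded operators on `X` in which the finite rank
operators are dense (A1), whose quasi-norm dominates the operator norm (A2), which is a
two-sided ideal with submultiplicative quasi-norm (A3), and whose members have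
`l_p`-summable discrete eigenvalue sequences, with eigenvalue constant `γ` (A4). -/
structure LpIdeal (p : ℝ) (X : Type*) [NormedAddCommGroup X] [NormedSpace ℂ X]
    [CompleteSpace X] where
  carrier : Set (X →L[ℂ] X)
  norm' : (X →L[ℂ] X) → ℝ
  q : ℝ
  γ : ℝ
  one_le_q : 1 ≤ q
  γ_nonneg : 0 ≤ γ
  add_mem : ∀ {K L : X →L[ℂ] X}, K ∈ carrier → L ∈ carrier → K + L ∈ carrier
  smul_mem : ∀ (c : ℂ) {L : X →L[ℂ] X}, L ∈ carrier → c • L ∈ carrier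
  norm'_nonneg : ∀ L ∈ carrier, 0 ≤ norm' L
  norm'_eq_zero_iff : ∀ L ∈ carrier, (norm' L = 0 ↔ L = 0)
  norm'_smul : ∀ L ∈ carrier, ∀ c : ℂ, norm' (c • L) = ‖c‖ * norm' L
  norm'_add_le : ∀ K ∈ carrier, ∀ L ∈ carrier, norm' (K + L) ≤ q * (norm' K + norm' L)
  finiteRank_mem : ∀ F : X →L[ℂ] X, IsFiniteRank F → F ∈ carrier
  dense_finiteRank : ∀ L ∈ carrier, ∀ ε > 0, ∃ F : X →L[ℂ] X, IsFiniteRank F ∧ norm' (L - F) < ε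
  opNorm_le : ∀ L ∈ carrier, ‖L‖ ≤ norm' L
  mul_mem : ∀ L ∈ carrier, ∀ A B : X →L[ℂ] X, A * L * B ∈ carrier
  mul_norm'_le : ∀ L ∈ carrier, ∀ A B : X →L[ℂ] X, norm' (A * L * B) ≤ ‖A‖ * norm' L * ‖B‖
  eig_le : ∀ L ∈ carrier, eigSum p L ≤ ENNReal.ofReal ((γ * norm' L) ^ p)

/-- `D` is continuous on the ideal `I` with respect to the quasi-norm of `I`. -/
def IdealContinuous {p : ℝ} (I : LpIdeal p X) (D : (X →L[ℂ] X) → ℂ) : Prop :=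
  ∀ L ∈ I.carrier, ∀ ε > 0, ∃ δ > 0, ∀ K ∈ I.carrier, I.norm' (K - L) < δ → ‖D K - D L‖ < ε

/-- `D` agrees with the `p`-regularized determinant on the finite rank operators. -/
def ExtendsDetp (p : ℝ) (D : (X →L[ℂ] X) → ℂ) : Prop :=
  ∀ F : X →L[ℂ] X, IsFiniteRank F → D F = detp p F


section Aux

variable {X : Type*} [NormedAddCommGroup X] [NormedSpace ℂ X] [CompleteSpace X]

set_option linter.unusedSectionVars false in
set_option synthInstance.maxHeartbeats 1000000 in
open LinearMap in
lemma comm_core' (A C : X →L[ℂ] X) (hA : IsFiniteRank A) :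
    trOn (A * C) = trOn (C * A) ∧ detOneSub (A * C) = detOneSub (C * A) := by
  haveI hA' : FiniteDimensional ℂ (range (A : X →ₗ[ℂ] X)) := hA
  set T : X →ₗ[ℂ] X := ((A * C : X →L[ℂ] X) : X →ₗ[ℂ] X) with hT
  set S : X →ₗ[ℂ] X := ((C * A : X →L[ℂ] X) : X →ₗ[ℂ] X) with hS
  have hTx : ∀ x, T x = A (C x) := fun x => by
    simp [hT, ContinuousLinearMap.mul_apply]
  have hSx : ∀ x, S x = C (A x) := fun x => by
    simp [hS, ContinuousLinearMap.mul_apply]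
  haveI i1 : FiniteDimensional ℂ (range T) := by
    apply Submodule.finiteDimensional_of_le (S₂ := range (A : X →ₗ[ℂ] X))
    rintro _ ⟨x, rfl⟩
    exact ⟨C x, by rw [hTx]; simp⟩
  haveI i2 : FiniteDimensional ℂ (range S) := by
    haveI : FiniteDimensional ℂ
        ((range (A : X →ₗ[ℂ] X)).map (C : X →ₗ[ℂ] X)) := Module.Finite.map _ _
    apply Submodule.finiteDimensional_of_le
      (S₂ := (range (A : X →ₗ[ℂ] X)).map (C : X →ₗ[ℂ] X))
    rintro _ ⟨x, rfl⟩
    exact ⟨A x, ⟨x, rfl⟩, by rw [hSx]; simp⟩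
  have hcmem : ∀ w : range T, (C : X →ₗ[ℂ] X) ((range T).subtype w) ∈ range S := by
    rintro ⟨_, x, rfl⟩
    exact ⟨C x, by simp [hSx, hTx]⟩
  have hamem : ∀ w : range S, (A : X →ₗ[ℂ] X) ((range S).subtype w) ∈ range T := by
    rintro ⟨_, x, rfl⟩
    exact ⟨A x, by simp [hSx, hTx]⟩
  set c : range T →ₗ[ℂ] range S :=
    LinearMap.codRestrict _ ((C : X →ₗ[ℂ] X).comp (range T).subtype) hcmem with hc
  set a : range S →ₗ[ℂ] range T :=
    LinearMap.codRestrict _ ((A : X →ₗ[ℂ] X).comp (range S).subtype) hamem with ha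
  have he1 : T.restrict (fun x _ => mem_range_self T x) = a ∘ₗ c := by
    ext w
    simp [ha, hc, restrict_apply, hTx]
  have he2 : S.restrict (fun x _ => mem_range_self S x) = c ∘ₗ a := by
    ext w
    simp [ha, hc, restrict_apply, hSx]
  constructor
  · show LinearMap.trace ℂ _ _ = LinearMap.trace ℂ _ _
    rw [he1, he2, trace_comp_comm']
  · show LinearMap.det _ = LinearMap.det _
    rw [he1, he2]
    let b1 := Module.finBasis ℂ (range T)
    let b2 := Module.finBasis ℂ (range S)
    rw [← LinearMap.det_toMatrix b1, ← LinearMap.det_toMatrix b2,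
      map_sub (LinearMap.toMatrix b1 b1), map_sub (LinearMap.toMatrix b2 b2),
      LinearMap.toMatrix_id, LinearMap.toMatrix_id,
      LinearMap.toMatrix_comp b1 b2 b1, LinearMap.toMatrix_comp b2 b1 b2,
      Matrix.det_one_sub_mul_comm]

lemma detp_comm' (p : ℝ) (F B : X →L[ℂ] X) (hF : IsFiniteRank F) :
    detp p (F * B) = detp p (B * F) := by
  unfold detp
  rw [(comm_core' F B hF).2]
  congr 2
  apply Finset.sum_congr rfl
  intro k hk
  have hk1 : 1 ≤ k := (Finset.mem_Icc.mp hk).1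
  obtain ⟨n, rfl⟩ : ∃ n, k = n + 1 := ⟨k - 1, by omega⟩
  have hsc : SemiconjBy F (B * F) (F * B) := (mul_assoc F B F).symm
  have hpow : (F * B) ^ (n + 1) = F * ((B * F) ^ n * B) := by
    rw [pow_succ, ← mul_assoc, ← (hsc.pow_right n).eq, mul_assoc]
  rw [hpow, (comm_core' F ((B * F) ^ n * B) hF).1]
  rw [mul_assoc, pow_succ]

end Aux

/-- Let `I` be an `l_p`-ideal in `B(X)` and let `D` be the (unique)
`‖·‖_I`-continuous function with `D F = det_p(I-F)` for all finite rank `F`.  Then for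
`L ∈ I` and `B ∈ B(X)`, `det_{p,I}(I-LB) = det_{p,I}(I-BL)`. -/
theorem detpIdeal_comm (p : ℝ) (hp : 0 < p) (I : LpIdeal p X)
    (D : (X →L[ℂ] X) → ℂ) (hDc : IdealContinuous I D) (hDe : ExtendsDetp p D)
    (L : X →L[ℂ] X) (hL : L ∈ I.carrier) (B : X →L[ℂ] X) :
    D (L * B) = D (B * L) := by
  have hLB : L * B ∈ I.carrier := by simpa using I.mul_mem L hL 1 B
  have hBL : B * L ∈ I.carrier := by simpa using I.mul_mem L hL B 1
  have key : ∀ ε > 0, ‖D (L * B) - D (B * L)‖ < ε := by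
    intro ε hε
    obtain ⟨δ₁, hδ₁, h₁⟩ := hDc (L * B) hLB (ε / 2) (by positivity)
    obtain ⟨δ₂, hδ₂, h₂⟩ := hDc (B * L) hBL (ε / 2) (by positivity)
    set δ := min δ₁ δ₂ / (‖B‖ + 1) with hδdef
    have hδpos : 0 < δ := by
      apply div_pos (lt_min hδ₁ hδ₂) (by positivity)
    obtain ⟨F, hFr, hFd⟩ := I.dense_finiteRank L hL δ hδpos
    have hFm : F ∈ I.carrier := I.finiteRank_mem F hFr
    have hLF : L - F ∈ I.carrier := by
      have := I.add_mem hL (I.smul_mem (-1) hFm)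
      simpa [sub_eq_add_neg] using this
    have hLFnn : 0 ≤ I.norm' (L - F) := I.norm'_nonneg _ hLF
    have hone : ‖(1 : X →L[ℂ] X)‖ ≤ 1 := by
      rw [ContinuousLinearMap.one_def]; exact ContinuousLinearMap.norm_id_le
    have hbound : ∀ G : X →L[ℂ] X, I.norm' G ≤ I.norm' (L - F) * ‖B‖ →
        I.norm' G < min δ₁ δ₂ := by
      intro G hG
      calc I.norm' G ≤ I.norm' (L - F) * ‖B‖ := hG
        _ ≤ I.norm' (L - F) * (‖B‖ + 1) := by nlinarith [norm_nonneg B]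
        _ < δ * (‖B‖ + 1) := by
            apply mul_lt_mul_of_pos_right hFd (by positivity)
        _ = min δ₁ δ₂ := by
            rw [hδdef, div_mul_cancel₀]; positivity
    have hb1 : I.norm' (L * B - F * B) < min δ₁ δ₂ := by
      apply hbound
      have := I.mul_norm'_le (L - F) hLF 1 B
      have h2 : (1 : X →L[ℂ] X) * (L - F) * B = L * B - F * B := by
        rw [one_mul, sub_mul]
      rw [h2] at this
      calc I.norm' (L * B - F * B) ≤ ‖(1 : X →L[ℂ] X)‖ * I.norm' (L - F) * ‖B‖ := this
        _ ≤ 1 * I.norm' (L - F) * ‖B‖ :=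
            mul_le_mul_of_nonneg_right (mul_le_mul_of_nonneg_right hone hLFnn) (norm_nonneg B)
        _ = I.norm' (L - F) * ‖B‖ := by ring
    have hmem1 : L * B - F * B ∈ I.carrier := by
      have := I.mul_mem (L - F) hLF 1 B
      simpa [one_mul, sub_mul] using this
    have hb1' : I.norm' (F * B - L * B) < δ₁ := by
      have hs : I.norm' (F * B - L * B) = I.norm' (L * B - F * B) := by
        rw [← neg_sub, ← neg_one_smul ℂ (L * B - F * B), I.norm'_smul _ hmem1]
        simp
      rw [hs]; exact lt_of_lt_of_le hb1 (min_le_left _ _)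
    have hb2 : I.norm' (B * L - B * F) < min δ₁ δ₂ := by
      apply hbound
      have := I.mul_norm'_le (L - F) hLF B 1
      have h2 : B * (L - F) * (1 : X →L[ℂ] X) = B * L - B * F := by
        rw [mul_one, mul_sub]
      rw [h2] at this
      calc I.norm' (B * L - B * F) ≤ ‖B‖ * I.norm' (L - F) * ‖(1 : X →L[ℂ] X)‖ := this
        _ ≤ ‖B‖ * I.norm' (L - F) * 1 :=
            mul_le_mul_of_nonneg_left hone (mul_nonneg (norm_nonneg B) hLFnn)
        _ = I.norm' (L - F) * ‖B‖ := by ring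
    have hmem2 : B * L - B * F ∈ I.carrier := by
      have := I.mul_mem (L - F) hLF B 1
      simpa [mul_one, mul_sub] using this
    have hb2' : I.norm' (B * F - B * L) < δ₂ := by
      have hs : I.norm' (B * F - B * L) = I.norm' (B * L - B * F) := by
        rw [← neg_sub, ← neg_one_smul ℂ (B * L - B * F), I.norm'_smul _ hmem2]
        simp
      rw [hs]; exact lt_of_lt_of_le hb2 (min_le_right _ _)
    have hFBr : IsFiniteRank (F * B) := by
      haveI : FiniteDimensional ℂ (LinearMap.range (F : X →ₗ[ℂ] X)) := hFr
      apply Submodule.finiteDimensional_of_le (S₂ := LinearMap.range (F : X →ₗ[ℂ] X))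
      rintro _ ⟨x, rfl⟩
      exact ⟨B x, by simp [ContinuousLinearMap.mul_apply]⟩
    have hBFr : IsFiniteRank (B * F) := by
      haveI : FiniteDimensional ℂ (LinearMap.range (F : X →ₗ[ℂ] X)) := hFr
      haveI : FiniteDimensional ℂ
          ((LinearMap.range (F : X →ₗ[ℂ] X)).map (B : X →ₗ[ℂ] X)) := Module.Finite.map _ _
      apply Submodule.finiteDimensional_of_le
        (S₂ := (LinearMap.range (F : X →ₗ[ℂ] X)).map (B : X →ₗ[ℂ] X))
      rintro _ ⟨x, rfl⟩
      exact ⟨F x, ⟨x, rfl⟩, by simp [ContinuousLinearMap.mul_apply]⟩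
    have e1 : ‖D (F * B) - D (L * B)‖ < ε / 2 :=
      h₁ (F * B) (I.finiteRank_mem _ hFBr) hb1'
    have e2 : ‖D (B * F) - D (B * L)‖ < ε / 2 :=
      h₂ (B * F) (I.finiteRank_mem _ hBFr) hb2'
    have eFB : D (F * B) = D (B * F) := by
      rw [hDe _ hFBr, hDe _ hBFr, detp_comm' p F B hFr]
    calc ‖D (L * B) - D (B * L)‖
        = ‖(D (F * B) - D (L * B)) - (D (B * F) - D (B * L))‖ := by
          rw [eFB]
          rw [show D (L * B) - D (B * L) =
            -((D (B * F) - D (L * B)) - (D (B * F) - D (B * L))) by ring, norm_neg]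
      _ ≤ ‖D (F * B) - D (L * B)‖ + ‖D (B * F) - D (B * L)‖ := norm_sub_le _ _
      _ < ε / 2 + ε / 2 := add_lt_add e1 e2
      _ = ε := by ring
  by_contra h
  have hpos : 0 < ‖D (L * B) - D (B * L)‖ := by
    rw [norm_pos_iff]; exact sub_ne_zero.mpr h
  exact lt_irrefl _ (key _ hpos)
end

section
/- Let X be a complex Banach space, p > 0, let (I,‖·‖_I) be an l_p-ideal in B(X), let A ∈ B(X), K ∈ I, and let D(λ) = det_{p,I}(I − K(λ−A)^{-1}) for λ ∈ ρ(A) be the p-regularized perturbation determinant. Then for λ ∈ ρ(A): D(λ) = 0 if and only if λ ∈ σ(A+K). -/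
open scoped ENNReal

variable {X : Type*} [NormedAddCommGroup X] [NormedSpace ℂ X] [CompleteSpace X]

open scoped ENNReal

variable {X : Type*} [NormedAddCommGroup X] [NormedSpace ℂ X] [CompleteSpace X]

/-!
Approximate `L ∈ I` in the ideal quasi-norm by a finite rank `F₀` so closely that `S := L - F₀`
has `‖S‖ < 1` and `D S ≠ 0`. Then `I - L = (I - F₀ (I - S)⁻¹) (I - S)`. For finite rank `S`,
multiplicativity of `det` and a telescoping of `tr ((S + F₀) ^ k) - tr (S ^ k)` into traces of
operators `F₀ * _` give `det_p (I - S - F₀) = det_p (I - S) * c(S)`, where `c(S)` depends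
continuously on `S` in operator norm and vanishes exactly when `det (I - F₀ (I - S)⁻¹) = 0`.
By density of finite rank operators and continuity of `D`, the identity `D (S + F₀) = D S * c(S)`
survives for `S ∈ I`; so `D L = 0` iff `I - F₀ (I - S)⁻¹` is not invertible (Fredholm alternative
for a finite rank perturbation of `I`) iff `I - L` is not invertible. Finally
`z - (A + K) = (I - K (z - A)⁻¹) (z - A)`.
-/

open Filter Topology

section FiniteRank

variable {E : Type*} [NormedAddCommGroup E] [NormedSpace ℂ E]

theorem range_mul_le_left (F A : E →L[ℂ] E) :
    LinearMap.range ((F * A : E →L[ℂ] E) : E →ₗ[ℂ] E) ≤ LinearMap.range (F : E →ₗ[ℂ] E) :=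
  LinearMap.range_comp_le_range (A : E →ₗ[ℂ] E) (F : E →ₗ[ℂ] E)

theorem range_mul_le_map (A F : E →L[ℂ] E) :
    LinearMap.range ((A * F : E →L[ℂ] E) : E →ₗ[ℂ] E) ≤
      (LinearMap.range (F : E →ₗ[ℂ] E)).map (A : E →ₗ[ℂ] E) :=
  (LinearMap.range_comp (F : E →ₗ[ℂ] E) (A : E →ₗ[ℂ] E)).le

namespace IsFiniteRank

variable {F G : E →L[ℂ] E}

theorem of_range_le {V : Submodule ℂ E} [FiniteDimensional ℂ V]
    (h : LinearMap.range (F : E →ₗ[ℂ] E) ≤ V) : IsFiniteRank F :=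
  Submodule.finiteDimensional_of_le h

theorem zero : IsFiniteRank (0 : E →L[ℂ] E) :=
  of_range_le (V := ⊥) (by simp)

theorem add (hF : IsFiniteRank F) (hG : IsFiniteRank G) : IsFiniteRank (F + G) :=
  have : FiniteDimensional ℂ (LinearMap.range (F : E →ₗ[ℂ] E)) := hF
  have : FiniteDimensional ℂ (LinearMap.range (G : E →ₗ[ℂ] E)) := hG
  of_range_le (LinearMap.range_add_le _ _)

theorem neg (hF : IsFiniteRank F) : IsFiniteRank (-F) :=
  have : FiniteDimensional ℂ (LinearMap.range (F : E →ₗ[ℂ] E)) := hF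
  of_range_le (LinearMap.range_neg _).le

theorem sub (hF : IsFiniteRank F) (hG : IsFiniteRank G) : IsFiniteRank (F - G) := by
  simpa only [sub_eq_add_neg] using hF.add hG.neg

theorem mul_right (hF : IsFiniteRank F) (A : E →L[ℂ] E) : IsFiniteRank (F * A) :=
  have : FiniteDimensional ℂ (LinearMap.range (F : E →ₗ[ℂ] E)) := hF
  of_range_le (range_mul_le_left F A)

theorem mul_left (hF : IsFiniteRank F) (A : E →L[ℂ] E) : IsFiniteRank (A * F) :=
  have : FiniteDimensional ℂ (LinearMap.range (F : E →ₗ[ℂ] E)) := hF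
  of_range_le (range_mul_le_map A F)

end IsFiniteRank

abbrev restrictOfRangeLE (F : E →L[ℂ] E) {V : Submodule ℂ E}
    (h : LinearMap.range (F : E →ₗ[ℂ] E) ≤ V) : Module.End ℂ V :=
  (F : E →ₗ[ℂ] E).restrict fun x _ => h (LinearMap.mem_range_self _ x)

theorem LinearMap.det_id_sub_comp_comm {K V W : Type*} [Field K] [AddCommGroup V] [Module K V]
    [AddCommGroup W] [Module K W] [FiniteDimensional K V] [FiniteDimensional K W]
    (f : V →ₗ[K] W) (g : W →ₗ[K] V) :
    LinearMap.det (LinearMap.id - g ∘ₗ f) = LinearMap.det (LinearMap.id - f ∘ₗ g) := by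
  let bV := Module.finBasis K V
  let bW := Module.finBasis K W
  rw [← LinearMap.det_toMatrix bV, ← LinearMap.det_toMatrix bW, map_sub, map_sub,
    LinearMap.toMatrix_id, LinearMap.toMatrix_id, LinearMap.toMatrix_comp bV bW bV,
    LinearMap.toMatrix_comp bW bV bW, Matrix.det_one_sub_mul_comm]

variable {F G : E →L[ℂ] E} {V : Submodule ℂ E} [FiniteDimensional ℂ V]

theorem trOn_eq_trace (h : LinearMap.range (F : E →ₗ[ℂ] E) ≤ V) :
    trOn F = LinearMap.trace ℂ V (restrictOfRangeLE F h) := by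
  have : FiniteDimensional ℂ (LinearMap.range (F : E →ₗ[ℂ] E)) := IsFiniteRank.of_range_le h
  let f : V →ₗ[ℂ] LinearMap.range (F : E →ₗ[ℂ] E) :=
    (F : E →ₗ[ℂ] E).rangeRestrict ∘ₗ V.subtype
  let g := Submodule.inclusion h
  rw [show restrictOfRangeLE F h = g ∘ₗ f from rfl, LinearMap.trace_comp_comm']
  rfl

theorem detOneSub_eq_det (h : LinearMap.range (F : E →ₗ[ℂ] E) ≤ V) :
    detOneSub F = LinearMap.det (LinearMap.id - restrictOfRangeLE F h) := by
  have : FiniteDimensional ℂ (LinearMap.range (F : E →ₗ[ℂ] E)) := IsFiniteRank.of_range_le h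
  let f : V →ₗ[ℂ] LinearMap.range (F : E →ₗ[ℂ] E) :=
    (F : E →ₗ[ℂ] E).rangeRestrict ∘ₗ V.subtype
  let g := Submodule.inclusion h
  rw [show restrictOfRangeLE F h = g ∘ₗ f from rfl, LinearMap.det_id_sub_comp_comm]
  rfl

theorem trOn_sub (hF : IsFiniteRank F) (hG : IsFiniteRank G) :
    trOn (F - G) = trOn F - trOn G := by
  set V := LinearMap.range (F : E →ₗ[ℂ] E) ⊔ LinearMap.range (G : E →ₗ[ℂ] E)
  have : FiniteDimensional ℂ (LinearMap.range (F : E →ₗ[ℂ] E)) := hF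
  have : FiniteDimensional ℂ (LinearMap.range (G : E →ₗ[ℂ] E)) := hG
  have hV : LinearMap.range ((F - G : E →L[ℂ] E) : E →ₗ[ℂ] E) ≤ V := by
    rintro _ ⟨x, rfl⟩
    exact Submodule.sub_mem_sup (LinearMap.mem_range_self _ x) (LinearMap.mem_range_self _ x)
  rw [trOn_eq_trace hV, trOn_eq_trace (le_sup_left : _ ≤ V),
    trOn_eq_trace (le_sup_right : _ ≤ V), ← map_sub]
  rfl

theorem trOn_zero : trOn (0 : E →L[ℂ] E) = 0 := by
  simpa using trOn_sub (IsFiniteRank.zero (E := E)) IsFiniteRank.zero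

theorem trOn_mul_comm (hF : IsFiniteRank F) (A : E →L[ℂ] E) : trOn (A * F) = trOn (F * A) := by
  set R := LinearMap.range (F : E →ₗ[ℂ] E)
  have : FiniteDimensional ℂ R := hF
  let f : R →ₗ[ℂ] R.map (A : E →ₗ[ℂ] E) := (A : E →ₗ[ℂ] E).submoduleMap R
  let g : R.map (A : E →ₗ[ℂ] E) →ₗ[ℂ] R := (F : E →ₗ[ℂ] E).rangeRestrict ∘ₗ Submodule.subtype _
  rw [trOn_eq_trace (range_mul_le_map A F), trOn_eq_trace (range_mul_le_left F A),
    show restrictOfRangeLE (A * F) _ = f ∘ₗ g from rfl,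
    show restrictOfRangeLE (F * A) _ = g ∘ₗ f from rfl, LinearMap.trace_comp_comm']

theorem trOn_pow_sub_pow (hF : IsFiniteRank F) (hG : IsFiniteRank G) (k : ℕ) :
    trOn (F ^ k) - trOn (G ^ k) =
      ∑ j ∈ Finset.range k, trOn ((F - G) * (G ^ (k - 1 - j) * F ^ j)) := by
  have hF0 : trOn (F ^ k) = trOn (F ^ k * G ^ (k - k)) := by simp
  have hG0 : trOn (G ^ k) = trOn (F ^ 0 * G ^ (k - 0)) := by simp
  rw [hF0, hG0, ← Finset.sum_range_sub (fun j => trOn (F ^ j * G ^ (k - j)))]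
  refine Finset.sum_congr rfl fun j hj => ?_
  obtain ⟨c, rfl⟩ : ∃ c, k = j + 1 + c := ⟨k - (j + 1), by grind⟩
  rw [show j + 1 + c - (j + 1) = c by omega, show j + 1 + c - j = c + 1 by omega,
    show j + 1 + c - 1 - j = c by omega, pow_succ, pow_succ',
    ← trOn_sub ((hF.mul_left _).mul_right _) ((hG.mul_right _).mul_left _),
    show F ^ j * F * G ^ c - F ^ j * (G * G ^ c) = F ^ j * ((F - G) * G ^ c) by noncomm_ring,
    trOn_mul_comm ((hF.sub hG).mul_right _), mul_assoc]

theorem detOneSub_add_sub_mul (hF : IsFiniteRank F) (hG : IsFiniteRank G) :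
    detOneSub (F + G - F * G) = detOneSub F * detOneSub G := by
  set V := LinearMap.range (F : E →ₗ[ℂ] E) ⊔ LinearMap.range (G : E →ₗ[ℂ] E)
  have : FiniteDimensional ℂ (LinearMap.range (F : E →ₗ[ℂ] E)) := hF
  have : FiniteDimensional ℂ (LinearMap.range (G : E →ₗ[ℂ] E)) := hG
  have happ (x : E) : (F + G - F * G) x = F (x - G x) + G x := by
    simp only [sub_apply, add_apply, mul_apply_eq_comp, map_sub]
    abel
  have hV : LinearMap.range ((F + G - F * G : E →L[ℂ] E) : E →ₗ[ℂ] E) ≤ V := by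
    rintro _ ⟨x, rfl⟩
    change (F + G - F * G) x ∈ V
    rw [happ]
    exact Submodule.add_mem_sup (LinearMap.mem_range_self _ _) (LinearMap.mem_range_self _ _)
  rw [detOneSub_eq_det hV, detOneSub_eq_det (le_sup_left : _ ≤ V),
    detOneSub_eq_det (le_sup_right : _ ≤ V), ← LinearMap.det_comp]
  congr 1
  ext x
  change (x : E) - (F + G - F * G) x = ((x : E) - G x) - F ((x : E) - G x)
  rw [happ]
  abel

theorem detOneSub_eq_zero_iff (hF : IsFiniteRank F) :
    detOneSub F = 0 ↔ ∃ x ≠ 0, F x = x := by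
  have : FiniteDimensional ℂ (LinearMap.range (F : E →ₗ[ℂ] E)) := hF
  rw [detOneSub_eq_det le_rfl, LinearMap.det_eq_zero_iff_ker_ne_bot, Submodule.ne_bot_iff]
  constructor
  · rintro ⟨x, hx, hx0⟩
    simp only [LinearMap.mem_ker] at hx
    exact ⟨x, by simpa using hx0, (sub_eq_zero.1 (congrArg Subtype.val hx)).symm⟩
  · rintro ⟨x, hx0, hFx⟩
    refine ⟨⟨x, hFx ▸ LinearMap.mem_range_self _ x⟩, ?_, by simpa using hx0⟩
    ext
    simp [hFx]

theorem IsFiniteRank.isCompactOperator (hF : IsFiniteRank F) : IsCompactOperator F := by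
  have : FiniteDimensional ℂ (LinearMap.range (F : E →ₗ[ℂ] E)) := hF
  have : ProperSpace (LinearMap.range (F : E →ₗ[ℂ] E)) := FiniteDimensional.proper ℂ _
  exact (isCompactOperator_of_locallyCompactSpace_dom
    (F.codRestrict _ fun x => LinearMap.mem_range_self _ x)).continuous_comp continuous_subtype_val

theorem exists_continuous_eq_restrictOfRangeLE_mul (F : E →L[ℂ] E) :
    ∃ c : (E →L[ℂ] E) → (LinearMap.range (F : E →ₗ[ℂ] E) →L[ℂ] LinearMap.range (F : E →ₗ[ℂ] E)),
      Continuous c ∧ ∀ T, restrictOfRangeLE (F * T) (range_mul_le_left F T) = c T :=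
  ⟨fun T => (F.codRestrict _ fun x => LinearMap.mem_range_self _ x).comp
      (T.comp (Submodule.subtypeL _)),
    continuous_const.clm_comp (continuous_id.clm_comp continuous_const), fun _ => rfl⟩

theorem continuous_trOn_mul_left (hF : IsFiniteRank F) : Continuous fun T => trOn (F * T) := by
  have : FiniteDimensional ℂ (LinearMap.range (F : E →ₗ[ℂ] E)) := hF
  obtain ⟨c, hc, hFT⟩ := exists_continuous_eq_restrictOfRangeLE_mul F
  simp only [trOn_eq_trace (range_mul_le_left F _), hFT]
  exact (LinearMap.trace ℂ _ ∘ₗ ContinuousLinearMap.coeLM ℂ).continuous_of_finiteDimensional.comp hc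

theorem continuous_detOneSub_mul_left (hF : IsFiniteRank F) :
    Continuous fun T => detOneSub (F * T) := by
  have : FiniteDimensional ℂ (LinearMap.range (F : E →ₗ[ℂ] E)) := hF
  obtain ⟨c, hc, hFT⟩ := exists_continuous_eq_restrictOfRangeLE_mul F
  simp only [detOneSub_eq_det (range_mul_le_left F _), hFT]
  exact ContinuousLinearMap.continuous_det.comp (f := fun T => 1 - c T) (continuous_const.sub hc)

theorem detOneSub_zero : detOneSub (0 : E →L[ℂ] E) = 1 := by
  rw [detOneSub_eq_det (V := ⊥) (by simp), Subsingleton.elim (restrictOfRangeLE 0 _) 0, sub_zero,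
    LinearMap.det_id]

theorem detp_zero (p : ℝ) : detp p (0 : E →L[ℂ] E) = 1 := by
  rw [detp, detOneSub_zero, Finset.sum_eq_zero fun k hk => ?_, Complex.exp_zero, mul_one]
  rw [zero_pow (by grind), trOn_zero, zero_div]

/-- The differences `tr ((S + F₀) ^ k) - tr (S ^ k)` are telescoped into traces `tr (F₀ * _)`,
which remain meaningful, and continuous in `S`, when `S` has infinite rank. -/
noncomputable def detpCorrection (p : ℝ) (F₀ S : E →L[ℂ] E) : ℂ :=
  detOneSub (F₀ * Ring.inverse (1 - S)) *
    Complex.exp (∑ k ∈ Finset.Icc 1 (⌈p⌉₊ - 1),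
      (∑ j ∈ Finset.range k, trOn (F₀ * (S ^ (k - 1 - j) * (S + F₀) ^ j))) / (k : ℂ))

theorem detp_add_eq_mul_detpCorrection (p : ℝ) {S F₀ : E →L[ℂ] E} (hS : IsFiniteRank S)
    (hF₀ : IsFiniteRank F₀) (hu : IsUnit (1 - S)) :
    detp p (S + F₀) = detp p S * detpCorrection p F₀ S := by
  have hdet : detOneSub (S + F₀) = detOneSub (F₀ * Ring.inverse (1 - S)) * detOneSub S := by
    rw [← detOneSub_add_sub_mul (hF₀.mul_right _) hS]
    congr 1
    calc S + F₀ = F₀ * (Ring.inverse (1 - S) * (1 - S)) + S := by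
          rw [Ring.inverse_mul_cancel _ hu, mul_one, add_comm]
      _ = _ := by noncomm_ring
  have htr (k : ℕ) : trOn ((S + F₀) ^ k) =
      trOn (S ^ k) + ∑ j ∈ Finset.range k, trOn (F₀ * (S ^ (k - 1 - j) * (S + F₀) ^ j)) := by
    simpa only [add_sub_cancel_left, sub_eq_iff_eq_add'] using trOn_pow_sub_pow (hS.add hF₀) hS k
  simp only [detp, detpCorrection, hdet, htr, add_div, Finset.sum_add_distrib, Complex.exp_add]
  ring

end FiniteRank

variable {F : X →L[ℂ] X}

theorem IsFiniteRank.isUnit_one_sub_iff (hF : IsFiniteRank F) :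
    IsUnit (1 - F) ↔ ¬ ∃ x ≠ 0, F x = x := by
  rw [← not_iff_not, not_not, ← map_one (algebraMap ℂ (X →L[ℂ] X)), ← spectrum.mem_iff,
    ← hF.isCompactOperator.hasEigenvalue_iff_mem_spectrum one_ne_zero,
    Module.End.hasEigenvalue_iff, Submodule.ne_bot_iff]
  simp [and_comm]

theorem detOneSub_eq_zero_iff_not_isUnit (hF : IsFiniteRank F) :
    detOneSub F = 0 ↔ ¬ IsUnit (1 - F) := by
  rw [detOneSub_eq_zero_iff hF, hF.isUnit_one_sub_iff, not_not]

theorem continuousAt_detpCorrection (p : ℝ) {S F₀ : X →L[ℂ] X} (hF₀ : IsFiniteRank F₀)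
    (hu : IsUnit (1 - S)) : ContinuousAt (detpCorrection p F₀) S := by
  have hinv : ContinuousAt (fun T => Ring.inverse (1 - T)) S := by
    refine ContinuousAt.comp (g := Ring.inverse) ?_
      (continuous_const.sub continuous_id).continuousAt
    simpa using NormedRing.inverse_continuousAt hu.unit
  refine ((continuous_detOneSub_mul_left hF₀).continuousAt.comp hinv).mul
    (Continuous.continuousAt ?_)
  refine Continuous.cexp (continuous_finsetSum _ fun k _ => Continuous.div_const
    (continuous_finsetSum _ fun j _ => (continuous_trOn_mul_left hF₀).comp ?_) _)
  fun_prop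

theorem detpCorrection_eq_zero_iff (p : ℝ) {S F₀ : X →L[ℂ] X} (hF₀ : IsFiniteRank F₀)
    (hu : IsUnit (1 - S)) : detpCorrection p F₀ S = 0 ↔ ¬ IsUnit (1 - (S + F₀)) := by
  have hfac : 1 - (S + F₀) = (1 - F₀ * Ring.inverse (1 - S)) * (1 - S) := by
    rw [sub_mul, one_mul, mul_assoc, Ring.inverse_mul_cancel _ hu, mul_one, sub_add_eq_sub_sub]
  rw [detpCorrection, mul_eq_zero, or_iff_left (Complex.exp_ne_zero _),
    detOneSub_eq_zero_iff_not_isUnit (hF₀.mul_right _), hfac, hu.mul_right_iff]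

namespace LpIdeal

variable {p : ℝ} (I : LpIdeal p X) {K L : X →L[ℂ] X}

theorem sub_mem (hK : K ∈ I.carrier) (hL : L ∈ I.carrier) : K - L ∈ I.carrier := by
  simpa [sub_eq_add_neg] using I.add_mem hK (I.smul_mem (-1) hL)

theorem norm'_sub_comm (hK : K ∈ I.carrier) (hL : L ∈ I.carrier) :
    I.norm' (K - L) = I.norm' (L - K) := by
  simpa using I.norm'_smul (L - K) (I.sub_mem hL hK) (-1)

theorem exists_finiteRank_tendsto (hL : L ∈ I.carrier) :
    ∃ F : ℕ → X →L[ℂ] X, (∀ n, IsFiniteRank (F n)) ∧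
      Tendsto (fun n => I.norm' (F n - L)) atTop (𝓝 0) := by
  choose F hF hFL using fun n : ℕ => I.dense_finiteRank L hL (1 / (n + 1)) Nat.one_div_pos_of_nat
  refine ⟨F, hF, squeeze_zero (fun n => I.norm'_nonneg _ (I.sub_mem (I.finiteRank_mem _ (hF n)) hL))
    (fun n => ?_) tendsto_one_div_add_atTop_nhds_zero_nat⟩
  rw [I.norm'_sub_comm (I.finiteRank_mem _ (hF n)) hL]
  exact (hFL n).le

theorem tendsto_of_norm'_sub_tendsto {T : ℕ → X →L[ℂ] X} (hT : ∀ n, T n ∈ I.carrier)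
    (hL : L ∈ I.carrier) (h : Tendsto (fun n => I.norm' (T n - L)) atTop (𝓝 0)) :
    Tendsto T atTop (𝓝 L) :=
  tendsto_iff_norm_sub_tendsto_zero.2 <|
    squeeze_zero (fun _ => norm_nonneg _) (fun n => I.opNorm_le _ (I.sub_mem (hT n) hL)) h

end LpIdeal

namespace IdealContinuous

variable {p : ℝ} {I : LpIdeal p X} {D : (X →L[ℂ] X) → ℂ} {L : X →L[ℂ] X}

theorem tendsto (hDc : IdealContinuous I D) (hL : L ∈ I.carrier) {T : ℕ → X →L[ℂ] X}
    (hT : ∀ n, T n ∈ I.carrier) (h : Tendsto (fun n => I.norm' (T n - L)) atTop (𝓝 0)) :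
    Tendsto (fun n => D (T n)) atTop (𝓝 (D L)) := by
  refine Metric.tendsto_atTop.2 fun ε hε => ?_
  obtain ⟨δ, hδ, hD⟩ := hDc L hL ε hε
  obtain ⟨N, hN⟩ := Metric.tendsto_atTop.1 h δ hδ
  refine ⟨N, fun n hn => ?_⟩
  rw [dist_eq_norm]
  exact hD _ (hT n) (lt_of_abs_lt (by simpa using hN n hn))

theorem exists_forall_ne_zero (hDc : IdealContinuous I D) (hL : L ∈ I.carrier) (hD : D L ≠ 0) :
    ∃ δ > 0, ∀ K ∈ I.carrier, I.norm' (K - L) < δ → D K ≠ 0 := by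
  obtain ⟨δ, hδ, hclose⟩ := hDc L hL ‖D L‖ (norm_pos_iff.2 hD)
  refine ⟨δ, hδ, fun K hK hKL hDK => ?_⟩
  simpa [hDK] using hclose K hK hKL

theorem apply_add_eq_mul_detpCorrection (hDc : IdealContinuous I D) (hDe : ExtendsDetp p D)
    {S F₀ : X →L[ℂ] X} (hS : S ∈ I.carrier) (hF₀ : IsFiniteRank F₀) (hu : IsUnit (1 - S)) :
    D (S + F₀) = D S * detpCorrection p F₀ S := by
  have hL := I.add_mem hS (I.finiteRank_mem _ hF₀)
  obtain ⟨F, hF, hFL⟩ := I.exists_finiteRank_tendsto hL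
  set T := fun n => F n - F₀
  have hT n : IsFiniteRank (T n) := (hF n).sub hF₀
  have hTmem n : T n ∈ I.carrier := I.finiteRank_mem _ (hT n)
  have hTS : Tendsto (fun n => I.norm' (T n - S)) atTop (𝓝 0) := by
    simpa only [T, sub_sub, add_comm F₀] using hFL
  have hTS' := I.tendsto_of_norm'_sub_tendsto hTmem hS hTS
  have hTu : ∀ᶠ n in atTop, IsUnit (1 - T n) :=
    ((continuous_const.sub continuous_id).tendsto S |>.comp hTS').eventually
      (Units.isOpen.mem_nhds hu)
  have hDF : ∀ᶠ n in atTop, D (F n) = D (T n) * detpCorrection p F₀ (T n) := by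
    filter_upwards [hTu] with n hn
    rw [hDe _ (hF n), hDe _ (hT n), ← detp_add_eq_mul_detpCorrection p (hT n) hF₀ hn,
      sub_add_cancel]
  refine tendsto_nhds_unique
    ((hDc.tendsto hL (fun n => I.finiteRank_mem _ (hF n)) hFL).congr' hDF) ?_
  exact (hDc.tendsto hS hTmem hTS).mul ((continuousAt_detpCorrection p hF₀ hu).tendsto.comp hTS')

theorem apply_eq_zero_iff (hDc : IdealContinuous I D) (hDe : ExtendsDetp p D)
    (hL : L ∈ I.carrier) : D L = 0 ↔ ¬ IsUnit (1 - L) := by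
  have h0 := I.finiteRank_mem 0 IsFiniteRank.zero
  obtain ⟨δ, hδ, hDne⟩ :=
    hDc.exists_forall_ne_zero h0 (by simp [hDe 0 IsFiniteRank.zero, detp_zero])
  obtain ⟨F₀, hF₀, hLF₀⟩ := I.dense_finiteRank L hL (min δ 1) (lt_min hδ one_pos)
  have hS := I.sub_mem hL (I.finiteRank_mem _ hF₀)
  have hu : IsUnit (1 - (L - F₀)) :=
    isUnit_one_sub_of_norm_lt_one ((I.opNorm_le _ hS).trans_lt (hLF₀.trans_le (min_le_right _ _)))
  have hDS : D (L - F₀) ≠ 0 :=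
    hDne _ hS (by simpa using hLF₀.trans_le (min_le_left _ _))
  rw [← sub_add_cancel L F₀, hDc.apply_add_eq_mul_detpCorrection hDe hS hF₀ hu, mul_eq_zero,
    or_iff_right hDS, detpCorrection_eq_zero_iff p hF₀ hu]

end IdealContinuous

theorem perturbationDeterminant_eq_zero_iff_general (p : ℝ) (I : LpIdeal p X)
    (D : (X →L[ℂ] X) → ℂ) (hDc : IdealContinuous I D) (hDe : ExtendsDetp p D)
    (A K : X →L[ℂ] X) (hK : K ∈ I.carrier) :
    ∀ z ∈ resolventSet ℂ A,
      (D (K * resolvent A z) = 0 ↔ z ∈ spectrum ℂ (A + K)) := by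
  intro z hz
  have hKR : K * resolvent A z ∈ I.carrier := by simpa using I.mul_mem K hK 1 (resolvent A z)
  have hfac : algebraMap ℂ (X →L[ℂ] X) z - (A + K) =
      (1 - K * resolvent A z) * (algebraMap ℂ (X →L[ℂ] X) z - A) := by
    rw [sub_mul, one_mul, mul_assoc, resolvent, Ring.inverse_mul_cancel _ hz]
    abel
  rw [hDc.apply_eq_zero_iff hDe hKR, spectrum.mem_iff, hfac, IsUnit.mul_right_iff hz]

/-- Let `I` be an `l_p`-ideal in `B(X)`, `A ∈ B(X)`, `K ∈ I`, and let
`D(z) = det_{p,I}(I - K (z-A)⁻¹)` be the perturbation determinant.  Then for `z ∈ ρ(A)`,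
`D(z) = 0` if and only if `z ∈ σ(A+K)`. -/
theorem perturbationDeterminant_eq_zero_iff (p : ℝ) (hp : 0 < p) (I : LpIdeal p X)
    (D : (X →L[ℂ] X) → ℂ) (hDc : IdealContinuous I D) (hDe : ExtendsDetp p D)
    (A K : X →L[ℂ] X) (hK : K ∈ I.carrier) :
    ∀ z ∈ resolventSet ℂ A,
      (D (K * resolvent A z) = 0 ↔ z ∈ spectrum ℂ (A + K)) :=
  perturbationDeterminant_eq_zero_iff_general p I D hDc hDe A K hK
end
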